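/- arXiv:1403.5070 — 5 statements merged into one kernel-verified Lean document; each statement's English description precedes it below -/
import Mathlib

section
/- Let $v \in \mathrm{BV}(\mathbb{R})$ be compactly supported and suppose its distributional derivative satisfies $Dv \leq B$ in the sense of measures, for some constant $B > 0$. Then $\|v\|_{L^\infty} \leq \sqrt{2B \|v\|_{L^1}}$. -/
open MeasureTheory Filter Set
open scoped Convolution Topology

/-- Key estimate for a function bounded below by a linear ramp: positive-value case. -/
lemma aux_sq (u : ℝ → ℝ) (B : ℝ) (hB : 0 < B) (hu : Integrable u)
    (hlip : ∀ x y : ℝ, x ≤ y → u y - u x ≤ B * (y - x)) (x₀ : ℝ) (hc : 0 < u x₀) :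
    (u x₀) ^ 2 ≤ 2 * B * ∫ x, |u x| := by
  set c := u x₀ with hcdef
  set a := x₀ - c / B with hadef
  have hax : a < x₀ := by
    have : 0 < c / B := div_pos hc hB
    simp only [hadef]; linarith
  have hpt : ∀ t ∈ Set.Ioc a x₀, c - B * (x₀ - t) ≤ |u t| := by
    intro t ht
    have h1 : u x₀ - u t ≤ B * (x₀ - t) := hlip t x₀ ht.2
    have h2 : c - B * (x₀ - t) ≤ u t := by linarith
    exact h2.trans (le_abs_self _)
  have hlin_cont : Continuous (fun t : ℝ => c - B * (x₀ - t)) := by continuity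
  have hIval : (∫ t in a..x₀, (c - B * (x₀ - t))) = c ^ 2 / (2 * B) := by
    have hrw : (fun t : ℝ => c - B * (x₀ - t)) = fun t : ℝ => (c - B * x₀) + B * t := by
      ext t; ring
    rw [hrw, intervalIntegral.integral_add intervalIntegrable_const
      (intervalIntegral.intervalIntegrable_id.const_mul B),
      intervalIntegral.integral_const, intervalIntegral.integral_const_mul,
      integral_id]
    have hBne : B ≠ 0 := ne_of_gt hB
    rw [hadef]
    field_simp
    have hBB : B * B⁻¹ = 1 := mul_inv_cancel₀ hBne
    linear_combination (2 * c ^ 2 - 2 * B * c * x₀) * hBB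
  have h1 : (∫ t in Set.Ioc a x₀, (c - B * (x₀ - t))) = c ^ 2 / (2 * B) := by
    rw [← intervalIntegral.integral_of_le hax.le]; exact hIval
  have h2 : (∫ t in Set.Ioc a x₀, (c - B * (x₀ - t))) ≤ ∫ t in Set.Ioc a x₀, |u t| := by
    refine setIntegral_mono_on ((hlin_cont.intervalIntegrable a x₀).1)
      (hu.abs.integrableOn) measurableSet_Ioc hpt
  have h3 : (∫ t in Set.Ioc a x₀, |u t|) ≤ ∫ t, |u t| :=
    setIntegral_le_integral hu.abs (Eventually.of_forall fun t => abs_nonneg _)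
  have key : c ^ 2 / (2 * B) ≤ ∫ t, |u t| := by
    rw [← h1]; exact h2.trans h3
  rw [div_le_iff₀ (by positivity : (0:ℝ) < 2 * B)] at key
  nlinarith [key]

/-- Key estimate: absolute value version. -/
lemma aux_abs (u : ℝ → ℝ) (B : ℝ) (hB : 0 < B) (hu : Integrable u)
    (hlip : ∀ x y : ℝ, x ≤ y → u y - u x ≤ B * (y - x)) (x₀ : ℝ) :
    |u x₀| ≤ Real.sqrt (2 * B * ∫ x, |u x|) := by
  have hnn : 0 ≤ ∫ x, |u x| := integral_nonneg fun x => abs_nonneg _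
  have key : (u x₀) ^ 2 ≤ 2 * B * ∫ x, |u x| := by
    rcases lt_trichotomy (u x₀) 0 with h | h | h
    · set w : ℝ → ℝ := fun x => -u (-x) with hw
      have hwint : Integrable w := (hu.comp_neg).neg
      have hwlip : ∀ x y : ℝ, x ≤ y → w y - w x ≤ B * (y - x) := by
        intro x y hxy
        have h1 := hlip (-y) (-x) (by linarith)
        have h2 : B * (-x - -y) = B * (y - x) := by ring
        simp only [hw]
        linarith
      have hwpos : 0 < w (-x₀) := by simp only [hw, neg_neg]; linarith
      have hmain := aux_sq w B hB hwint hwlip (-x₀) hwpos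
      have hint_eq : (∫ x, |w x|) = ∫ x, |u x| := by
        simp only [hw, abs_neg]
        exact integral_neg_eq_self (fun x => |u x|) volume
      rw [hint_eq] at hmain
      have hval : w (-x₀) = -u x₀ := by simp [hw]
      rw [hval] at hmain
      nlinarith [hmain]
    · rw [h]; nlinarith [hnn]
    · exact aux_sq u B hB hu hlip x₀ h
  calc |u x₀| = Real.sqrt ((u x₀) ^ 2) := (Real.sqrt_sq_eq_abs _).symm
    _ ≤ _ := Real.sqrt_le_sqrt key

/-- A compactly supported BV function on ℝ whose distributional derivative
satisfies `Dv ≤ B` in the sense of measures obeys `‖v‖_∞ ≤ √(2 B ‖v‖_{L¹})`. -/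
theorem stmt0 (v : ℝ → ℝ) (B : ℝ) (hB : 0 < B)
    (hbv : BoundedVariationOn v Set.univ)
    (hsupp : HasCompactSupport v)
    (hint : Integrable v)
    (hD : ∀ φ : ℝ → ℝ, ContDiff ℝ 1 φ → HasCompactSupport φ → (∀ x, 0 ≤ φ x) →
      -B * ∫ x, φ x ≤ ∫ x, v x * deriv φ x) :
    eLpNorm v ⊤ volume ≤ ENNReal.ofReal (Real.sqrt (2 * B * ∫ x, |v x|)) := by
  classical
  set M := Real.sqrt (2 * B * ∫ x, |v x|) with hM
  have hposn : ∀ n : ℕ, (0:ℝ) < ((n:ℝ) + 1)⁻¹ := fun n => by positivity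
  set φ : ℕ → ContDiffBump (0:ℝ) := fun n =>
    ⟨((n:ℝ) + 1)⁻¹, 2 * ((n:ℝ) + 1)⁻¹, hposn n, by nlinarith [hposn n]⟩ with hφdef
  set ρ : ℕ → ℝ → ℝ := fun n => (φ n).normed volume with hρdef
  set u : ℕ → ℝ → ℝ := fun n => (ρ n) ⋆[ContinuousLinearMap.lsmul ℝ ℝ] v with hudef
  have hvloc : LocallyIntegrable v := hint.locallyIntegrable
  -- derivative of the mollified functions
  have hderiv : ∀ n x, HasDerivAt (u n)
      ((deriv (ρ n) ⋆[ContinuousLinearMap.lsmul ℝ ℝ] v) x) x := fun n x =>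
    ((φ n).hasCompactSupport_normed).hasDerivAt_convolution_left
      (ContinuousLinearMap.lsmul ℝ ℝ) ((φ n).contDiff_normed) hvloc x
  -- derivative bound from the distributional inequality
  have hDbound : ∀ n x, (deriv (ρ n) ⋆[ContinuousLinearMap.lsmul ℝ ℝ] v) x ≤ B := by
    intro n x
    set ψ : ℝ → ℝ := fun t => ρ n (x - t) with hψdef
    have hψc : ContDiff ℝ 1 ψ :=
      ((φ n).contDiff_normed).comp (contDiff_const.sub contDiff_id)
    have hψs : HasCompactSupport ψ :=
      ((φ n).hasCompactSupport_normed).comp_homeomorph (Homeomorph.subLeft x)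
    have hψn : ∀ t, 0 ≤ ψ t := fun t => (φ n).nonneg_normed _
    have hρdiff : Differentiable ℝ (ρ n) :=
      ((φ n).contDiff_normed (n := 1)).differentiable (by norm_num)
    have hψd : ∀ t, deriv ψ t = -(deriv (ρ n) (x - t)) := by
      intro t
      have h1 : HasDerivAt (fun s : ℝ => x - s) (-1) t := (hasDerivAt_id t).const_sub x
      have h3 : HasDerivAt ψ (deriv (ρ n) (x - t) * (-1)) t :=
        HasDerivAt.comp t ((hρdiff (x - t)).hasDerivAt) h1
      simpa using h3.deriv
    have hint_ψ : (∫ t, ψ t) = 1 := by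
      simp only [hψdef]
      rw [integral_sub_left_eq_self (ρ n) volume x]
      exact (φ n).integral_normed
    have hD' := hD ψ hψc hψs hψn
    rw [hint_ψ] at hD'
    have heq : (∫ t, v t * deriv ψ t) = -∫ t, deriv (ρ n) (x - t) * v t := by
      rw [← integral_neg]
      congr 1; ext t; rw [hψd t]; ring
    have heq2 : (deriv (ρ n) ⋆[ContinuousLinearMap.lsmul ℝ ℝ] v) x
        = ∫ t, deriv (ρ n) (x - t) * v t := by
      rw [convolution_def,
        ← integral_sub_left_eq_self (fun s => deriv (ρ n) (x - s) * v s) volume x]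
      simp [sub_sub_cancel]
    rw [heq] at hD'
    rw [heq2]
    linarith
  -- Lipschitz-type bound for u n
  have hulip : ∀ n, ∀ x y : ℝ, x ≤ y → u n y - u n x ≤ B * (y - x) := by
    intro n x y hxy
    rcases eq_or_lt_of_le hxy with rfl | hlt
    · simp
    · obtain ⟨c, _, hceq⟩ := exists_hasDerivAt_eq_slope (u n)
        (fun t => (deriv (ρ n) ⋆[ContinuousLinearMap.lsmul ℝ ℝ] v) t) hlt
        (fun t _ => (hderiv n t).continuousAt.continuousWithinAt)
        (fun t _ => hderiv n t)
      have hc := hDbound n c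
      rw [hceq] at hc
      have h4 : u n y - u n x ≤ B * (y - x) := by
        rw [div_le_iff₀ (by linarith : (0:ℝ) < y - x)] at hc
        linarith
      exact h4
  -- integrability of u n
  have hρcont : ∀ n, Continuous (ρ n) := fun n => (φ n).continuous_normed
  have husupp : ∀ n, HasCompactSupport (u n) := fun n =>
    ((φ n).hasCompactSupport_normed).convolution (ContinuousLinearMap.lsmul ℝ ℝ) hsupp
  have hucont : ∀ n, Continuous (u n) := fun n =>
    ((φ n).hasCompactSupport_normed).continuous_convolution_left
      (ContinuousLinearMap.lsmul ℝ ℝ) (hρcont n) hvloc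
  have huint : ∀ n, Integrable (u n) := fun n =>
    (hucont n).integrable_of_hasCompactSupport (husupp n)
  -- L¹ bound: ∫ |u n| ≤ ∫ |v|
  have hvabs : Integrable (fun x => |v x|) := hint.abs
  have hL1 : ∀ n, (∫ x, |u n x|) ≤ ∫ x, |v x| := by
    intro n
    set w : ℝ → ℝ := (ρ n) ⋆[ContinuousLinearMap.lsmul ℝ ℝ] (fun x => |v x|) with hwdef
    have hvabs_supp : HasCompactSupport (fun x => |v x|) := by
      simpa [Real.norm_eq_abs] using hsupp.norm
    have hwcont : Continuous w :=
      ((φ n).hasCompactSupport_normed).continuous_convolution_left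
        (ContinuousLinearMap.lsmul ℝ ℝ) (hρcont n) hvabs.locallyIntegrable
    have hwsupp : HasCompactSupport w :=
      ((φ n).hasCompactSupport_normed).convolution (ContinuousLinearMap.lsmul ℝ ℝ) hvabs_supp
    have hwint : Integrable w := hwcont.integrable_of_hasCompactSupport hwsupp
    have hptw : ∀ x, |u n x| ≤ w x := by
      intro x
      have hux : u n x = ∫ t, ρ n t * v (x - t) := by
        simp only [hudef]
        rw [convolution_def]
        simp [ContinuousLinearMap.lsmul_apply]
      have hwx : w x = ∫ t, ρ n t * |v (x - t)| := by
        simp only [hwdef]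
        rw [convolution_def]
        simp [ContinuousLinearMap.lsmul_apply]
      rw [hux, hwx]
      have hn := norm_integral_le_integral_norm (μ := volume) (fun t => ρ n t * v (x - t))
      simp only [Real.norm_eq_abs, abs_mul] at hn
      calc |∫ t, ρ n t * v (x - t)| ≤ ∫ t, |ρ n t| * |v (x - t)| := hn
        _ = ∫ t, ρ n t * |v (x - t)| := by
            congr 1; ext t
            rw [abs_of_nonneg ((φ n).nonneg_normed t)]
    have hInt_w : (∫ x, w x) = ∫ x, |v x| := by
      simp only [hwdef]
      rw [integral_convolution (ContinuousLinearMap.lsmul ℝ ℝ)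
        ((φ n).integrable_normed) hvabs]
      simp [(φ n).integral_normed]
    calc (∫ x, |u n x|) ≤ ∫ x, w x := integral_mono (huint n).abs hwint hptw
      _ = ∫ x, |v x| := hInt_w
  -- uniform pointwise bound for u n
  have hnn : 0 ≤ ∫ x, |v x| := integral_nonneg fun x => abs_nonneg _
  have hbound : ∀ n x, |u n x| ≤ M := by
    intro n x
    refine (aux_abs (u n) B hB (huint n) (hulip n) x).trans (Real.sqrt_le_sqrt ?_)
    have := hL1 n
    nlinarith
  -- a.e. convergence of u n to v
  have htend : Tendsto (fun n : ℕ => (φ n).rOut) atTop (𝓝 0) := by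
    have h0 : Tendsto (fun n : ℕ => ((n:ℝ) + 1)⁻¹) atTop (𝓝 0) := by
      simpa [one_div] using (tendsto_one_div_add_atTop_nhds_zero_nat : Tendsto (fun n : ℕ => 1 / ((n:ℝ) + 1)) atTop (𝓝 0))
    have h2 := h0.const_mul (2:ℝ)
    simpa [hφdef] using h2
  have hratio : ∀ᶠ n : ℕ in atTop, (φ n).rOut ≤ 2 * (φ n).rIn :=
    Eventually.of_forall fun n => le_of_eq rfl
  have haec : ∀ᵐ x, Tendsto (fun n => u n x) atTop (𝓝 (v x)) := by
    simpa [hudef, hρdef] using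
      ContDiffBump.ae_convolution_tendsto_right_of_locallyIntegrable
        (φ := φ) (l := atTop) (K := 2) htend hratio hvloc
  have haebd : ∀ᵐ x, ‖v x‖ ≤ M := by
    filter_upwards [haec] with x hx
    rw [Real.norm_eq_abs]
    exact le_of_tendsto hx.abs (Eventually.of_forall fun n => hbound n x)
  calc eLpNorm v ⊤ volume = eLpNormEssSup v volume := eLpNorm_exponent_top
    _ ≤ ENNReal.ofReal M := eLpNormEssSup_le_of_ae_bound haebd
end

section
/- Let $L, M > 0$ and let $\mathcal{I}_{[L,M]}$ denote the set of nondecreasing functions $v : [0,L] \to [0,M]$. Then for every $\varepsilon$ with $0 < \varepsilon < LM/6$, the Kolmogorov $\varepsilon$-entropy of $\mathcal{I}_{[L,M]}$ in $L^1([0,L])$ satisfies $H_\varepsilon(\mathcal{I}_{[L,M]} \mid L^1([0,L])) \leq 4LM/\varepsilon$. -/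
set_option maxHeartbeats 1000000
open MeasureTheory

noncomputable def coverNum {α : Type*} (d : α → α → ℝ) (K : Set α) (ε : ℝ) : ℕ :=
  sInf {n : ℕ | ∃ F : Fin n → Set α, K ⊆ (⋃ i, F i) ∧
    ∀ i, ∀ x ∈ F i, ∀ y ∈ F i, d x y ≤ 2 * ε}

lemma coverNum_le_card {α ι : Type*} [Fintype ι] (d : α → α → ℝ) (K : Set α) (ε : ℝ)
    (S : ι → Set α) (hcov : K ⊆ ⋃ i, S i)
    (hdiam : ∀ i, ∀ x ∈ S i, ∀ y ∈ S i, d x y ≤ 2 * ε) :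
    coverNum d K ε ≤ Fintype.card ι := by
  apply Nat.sInf_le
  refine ⟨fun j => S ((Fintype.equivFin ι).symm j), ?_, fun j => hdiam _⟩
  intro x hx
  obtain ⟨i, hi⟩ := Set.mem_iUnion.1 (hcov hx)
  exact Set.mem_iUnion.2 ⟨Fintype.equivFin ι i, by simpa using hi⟩

lemma card_mono_le (n : ℕ) :
    Fintype.card {k : Fin n → Fin (n + 1) // Monotone k} ≤ 2 ^ (2 * n) := by
  have hcard : Fintype.card (Finset (Fin (2 * n))) = 2 ^ (2 * n) := by simp
  rw [← hcard]
  have hlt : ∀ (k : {k : Fin n → Fin (n + 1) // Monotone k}) (i : Fin n),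
      (k.1 i : ℕ) + i < 2 * n := by
    intro k i
    have h1 : (k.1 i : ℕ) < n + 1 := (k.1 i).2
    have h2 : (i : ℕ) < n := i.2
    omega
  set g : {k : Fin n → Fin (n + 1) // Monotone k} → Fin n → Fin (2 * n) :=
    fun k i => ⟨(k.1 i : ℕ) + i, hlt k i⟩ with hg
  have hsm : ∀ k, StrictMono (g k) := by
    intro k i j hij
    have := k.2 hij.le
    simp only [Fin.lt_def, g] at *
    omega
  apply Fintype.card_le_of_injective (fun k => Finset.univ.image (g k))
  intro k k' h
  simp only at h
  have hcardim : (Finset.univ.image (g k)).card = n := by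
    rw [Finset.card_image_of_injective _ (hsm k).injective, Finset.card_univ, Fintype.card_fin]
  have e1 := Finset.orderEmbOfFin_unique hcardim
    (f := g k) (fun i => Finset.mem_image_of_mem _ (Finset.mem_univ i)) (hsm k)
  have e2 := Finset.orderEmbOfFin_unique hcardim
    (f := g k') (fun i => h ▸ Finset.mem_image_of_mem _ (Finset.mem_univ i)) (hsm k')
  have : g k = g k' := e1.trans e2.symm
  ext i
  have := congrFun this i
  simp only [g, Fin.mk.injEq] at this
  omega

/-- De Lellis–Golse: the class of nondecreasing functions `[0,L] → [0,M]` has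
Kolmogorov ε-entropy in `L¹([0,L])` at most `4 L M / ε`, for `0 < ε < L M / 6`. -/
theorem stmt1 (L M : ℝ) (hL : 0 < L) (hM : 0 < M) (ε : ℝ) (hε : 0 < ε)
    (hε' : ε < L * M / 6) :
    Real.logb 2
      (coverNum (fun f g => ∫ x in Set.Icc (0:ℝ) L, |f x - g x|)
        {v : ℝ → ℝ | MonotoneOn v (Set.Icc 0 L) ∧
          ∀ x ∈ Set.Icc (0:ℝ) L, v x ∈ Set.Icc (0:ℝ) M} ε)
      ≤ 4 * L * M / ε := by
  set K : Set (ℝ → ℝ) := {v : ℝ → ℝ | MonotoneOn v (Set.Icc 0 L) ∧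
      ∀ x ∈ Set.Icc (0:ℝ) L, v x ∈ Set.Icc (0:ℝ) M} with hK
  set T : ℝ := L * M / ε with hT
  have hT6 : 6 < T := (lt_div_iff₀ hε).2 (by linarith)
  set n : ℕ := ⌈T⌉₊ with hn
  have hTpos : 0 < T := by linarith
  have hn1 : T ≤ (n : ℝ) := Nat.le_ceil T
  have hn2 : (n : ℝ) < T + 1 := Nat.ceil_lt_add_one hTpos.le
  have hnpos : 0 < n := Nat.ceil_pos.2 hTpos
  have hnR : (0:ℝ) < n := Nat.cast_pos.2 hnpos
  set δ : ℝ := L / n with hδdef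
  have hδ : 0 < δ := div_pos hL hnR
  set η : ℝ := M / n with hηdef
  have hη : 0 < η := div_pos hM hnR
  set p : ℕ → ℝ := fun j => j * δ with hp
  have hpn : p n = L := by
    simp only [hp, hδdef]
    field_simp
  have hp0 : p 0 = 0 := by simp [hp]
  have hpmono : ∀ {a b : ℕ}, a ≤ b → p a ≤ p b := by
    intro a b hab
    simp only [hp]
    have : (a:ℝ) ≤ b := Nat.cast_le.2 hab
    nlinarith
  have hpmem : ∀ j : ℕ, j ≤ n → p j ∈ Set.Icc (0:ℝ) L := by
    intro j hj
    refine ⟨by simpa [hp0] using hpmono (Nat.zero_le j), by simpa [hpn] using hpmono hj⟩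
  -- quantized index
  set qv : (ℝ → ℝ) → Fin n → ℕ :=
    fun v i => ⌊((v (p i) + v (p ((i:ℕ)+1))) / 2) / η + 1/2⌋₊ with hqv
  set kf : (ℝ → ℝ) → Fin n → Fin (n+1) :=
    fun v i => ⟨min (qv v i) n, by omega⟩ with hkf
  -- basic facts for v ∈ K
  have hvab : ∀ v ∈ K, ∀ i : Fin n,
      0 ≤ v (p i) ∧ v (p i) ≤ v (p ((i:ℕ)+1)) ∧ v (p ((i:ℕ)+1)) ≤ M := by
    intro v hv i
    obtain ⟨hv1, hv2⟩ := hv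
    have hi1 : p (i:ℕ) ∈ Set.Icc (0:ℝ) L := hpmem _ (le_of_lt i.2)
    have hi2 : p ((i:ℕ)+1) ∈ Set.Icc (0:ℝ) L := hpmem _ i.2
    exact ⟨(hv2 _ hi1).1, hv1 hi1 hi2 (hpmono (Nat.le_succ _)), (hv2 _ hi2).2⟩
  -- key estimate
  have key : ∀ v ∈ K, ∀ i : Fin n, ∀ x ∈ Set.Icc (p i) (p ((i:ℕ)+1)),
      |v x - ((kf v i : ℕ) : ℝ) * η| ≤ (v (p ((i:ℕ)+1)) - v (p i)) / 2 + η / 2 := by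
    intro v hv i x hx
    obtain ⟨ha0, hab, hbM⟩ := hvab v hv i
    set a := v (p i) with hadef
    set b := v (p ((i:ℕ)+1)) with hbdef
    set μ := (a + b) / 2 with hμdef
    have hμ0 : 0 ≤ μ := by rw [hμdef]; linarith
    have hμM : μ ≤ M := by rw [hμdef]; linarith
    have harg : 0 ≤ μ / η + 1/2 := by positivity
    set q : ℕ := qv v i with hq
    have hqeq : (q : ℝ) = (⌊μ / η + 1/2⌋₊ : ℕ) := by
      simp only [hq, hqv, hμdef, hadef, hbdef]
    have h1 : (q:ℝ) ≤ μ / η + 1/2 := by rw [hqeq]; exact_mod_cast Nat.floor_le harg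
    have h2 : μ / η + 1/2 < (q:ℝ) + 1 := by rw [hqeq]; exact Nat.lt_floor_add_one _
    have hμη : μ / η ≤ (n:ℝ) := by
      rw [div_le_iff₀ hη, hηdef]
      field_simp
      linarith
    have hqn : q ≤ n := by
      have hq1 : (q:ℝ) < (n:ℝ) + 1 := by linarith
      exact_mod_cast Nat.lt_succ_iff.1 (by exact_mod_cast hq1)
    have hkfq : ((kf v i : ℕ) : ℝ) = (q : ℝ) := by
      simp only [hkf]
      norm_cast
      simp [Nat.min_eq_left hqn, hq]
      exact hqn
    rw [hkfq]
    have e : μ / η * η = μ := div_mul_cancel₀ μ (ne_of_gt hη)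
    have g1 : ((q:ℝ) - 1/2) * η ≤ μ := by
      have := mul_le_mul_of_nonneg_right (by linarith : (q:ℝ) - 1/2 ≤ μ / η) hη.le
      linarith
    have g2 : μ ≤ ((q:ℝ) + 1/2) * η := by
      have := mul_le_mul_of_nonneg_right (by linarith : μ / η ≤ (q:ℝ) + 1/2) hη.le
      linarith
    have hxmem : x ∈ Set.Icc (0:ℝ) L := ⟨le_trans (hpmem _ (le_of_lt i.2)).1 hx.1,
        le_trans hx.2 (hpmem _ i.2).2⟩
    have hxa : a ≤ v x := hv.1 (hpmem _ (le_of_lt i.2)) hxmem hx.1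
    have hxb : v x ≤ b := hv.1 hxmem (hpmem _ i.2) hx.2
    rw [abs_le]
    constructor <;> nlinarith
  -- monotonicity of the index function
  have hkfmono : ∀ v ∈ K, Monotone (kf v) := by
    intro v hv i j hij
    have hijn : (i:ℕ) ≤ (j:ℕ) := hij
    have hqm : qv v i ≤ qv v j := by
      have h1 : v (p i) ≤ v (p j) := hv.1 (hpmem _ (le_of_lt i.2)) (hpmem _ (le_of_lt j.2))
        (hpmono hijn)
      have h2 : v (p ((i:ℕ)+1)) ≤ v (p ((j:ℕ)+1)) := hv.1 (hpmem _ i.2) (hpmem _ j.2)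
        (hpmono (Nat.succ_le_succ hijn))
      apply Nat.floor_le_floor
      gcongr
    simp only [hkf, Fin.le_def]
    exact min_le_min hqm (le_refl n)
  -- covering sets
  set S : {k : Fin n → Fin (n+1) // Monotone k} → Set (ℝ → ℝ) :=
    fun k => {v | v ∈ K ∧ ∀ i, kf v i = k.1 i} with hS
  have hcov : K ⊆ ⋃ k, S k := by
    intro v hv
    exact Set.mem_iUnion.2 ⟨⟨kf v, hkfmono v hv⟩, hv, fun i => rfl⟩
  have hLMn : M * L / n ≤ ε := by
    rw [div_le_iff₀ hnR]
    have : L * M ≤ (n:ℝ) * ε := by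
      rw [hT, div_le_iff₀ hε] at hn1
      linarith
    linarith
  have hdiam : ∀ k, ∀ v ∈ S k, ∀ w ∈ S k,
      (∫ x in Set.Icc (0:ℝ) L, |v x - w x|) ≤ 2 * ε := by
    intro k v hvS w hwS
    obtain ⟨hv, hvk⟩ := hvS
    obtain ⟨hw, hwk⟩ := hwS
    have Iv : IntegrableOn v (Set.Icc (0:ℝ) L) := hv.1.integrableOn_isCompact isCompact_Icc
    have Iw : IntegrableOn w (Set.Icc (0:ℝ) L) := hw.1.integrableOn_isCompact isCompact_Icc
    have Ivw : IntegrableOn (fun x => |v x - w x|) (Set.Icc (0:ℝ) L) := (Iv.sub Iw).abs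
    have hpt : ∀ i : Fin n, ∀ x ∈ Set.Icc (p i) (p ((i:ℕ)+1)),
        |v x - w x| ≤ (v (p ((i:ℕ)+1)) - v (p i)) / 2
          + (w (p ((i:ℕ)+1)) - w (p i)) / 2 + η := by
      intro i x hx
      have h1 := key v hv i x hx
      have h2 := key w hw i x hx
      rw [hvk i] at h1
      rw [hwk i] at h2
      have h3 := abs_sub_le (v x) (((k.1 i : ℕ):ℝ) * η) (w x)
      rw [abs_sub_comm (((k.1 i : ℕ):ℝ) * η) (w x)] at h3
      linarith
    have hsub : ∀ i : Fin n, Set.Ico (p i) (p ((i:ℕ)+1)) ⊆ Set.Icc (0:ℝ) L := by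
      intro i y hy
      exact ⟨le_trans (hpmem _ (le_of_lt i.2)).1 hy.1,
        le_of_lt (lt_of_lt_of_le hy.2 (hpmem _ i.2).2)⟩
    have hIU : Set.Ico (0:ℝ) L = ⋃ i : Fin n, Set.Ico (p i) (p ((i:ℕ)+1)) := by
      ext x
      simp only [Set.mem_Ico, Set.mem_iUnion]
      constructor
      · rintro ⟨hx0, hxL⟩
        have hxδ : 0 ≤ x / δ := div_nonneg hx0 hδ.le
        have hflt : ⌊x/δ⌋₊ < n := by
          rw [Nat.floor_lt hxδ, div_lt_iff₀ hδ]
          calc x < L := hxL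
          _ = n * δ := by rw [← hpn]
        refine ⟨⟨⌊x/δ⌋₊, hflt⟩, ?_, ?_⟩
        · calc ((⌊x/δ⌋₊:ℕ) : ℝ) * δ ≤ (x/δ) * δ :=
              mul_le_mul_of_nonneg_right (Nat.floor_le hxδ) hδ.le
          _ = x := div_mul_cancel₀ x hδ.ne'
        · have hlt1 : x / δ < (⌊x/δ⌋₊:ℝ) + 1 := Nat.lt_floor_add_one _
          have : x < ((⌊x/δ⌋₊:ℝ) + 1) * δ := by
            calc x = (x/δ) * δ := (div_mul_cancel₀ x hδ.ne').symm
            _ < ((⌊x/δ⌋₊:ℝ) + 1) * δ := mul_lt_mul_of_pos_right hlt1 hδ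
          simpa [hp] using this
      · rintro ⟨i, hx1, hx2⟩
        exact ⟨le_trans (hpmem _ (le_of_lt i.2)).1 hx1,
          lt_of_lt_of_le hx2 (hpmem _ i.2).2⟩
    have hvol : ∀ i : Fin n, (volume (Set.Ico (p i) (p ((i:ℕ)+1)))).toReal = δ := by
      intro i
      rw [Real.volume_Ico]
      have : p ((i:ℕ)+1) - p (i:ℕ) = δ := by
        simp only [hp]
        push_cast
        ring
      rw [this, ENNReal.toReal_ofReal hδ.le]
    have tel : ∀ u : ℝ → ℝ, ∑ i : Fin n, (u (p ((i:ℕ)+1)) - u (p i)) = u (p n) - u (p 0) := by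
      intro u
      rw [Fin.sum_univ_eq_sum_range (fun j => u (p (j+1)) - u (p j))]
      exact Finset.sum_range_sub (fun j => u (p j)) n
    calc (∫ x in Set.Icc (0:ℝ) L, |v x - w x|)
        = ∫ x in Set.Ico (0:ℝ) L, |v x - w x| :=
          (setIntegral_congr_set Ico_ae_eq_Icc).symm
      _ = ∑ i : Fin n, ∫ x in Set.Ico (p i) (p ((i:ℕ)+1)), |v x - w x| := by
          rw [hIU]
          apply integral_iUnion_fintype (fun i => measurableSet_Ico)
          · intro i j hij
            rw [Function.onFun, Set.Ico_disjoint_Ico]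
            rcases lt_or_gt_of_ne hij with h | h
            · have : p ((i:ℕ)+1) ≤ p (j:ℕ) := hpmono (Fin.lt_def.1 h)
              exact le_trans (min_le_left _ _) (le_trans this (le_max_right _ _))
            · have : p ((j:ℕ)+1) ≤ p (i:ℕ) := hpmono (Fin.lt_def.1 h)
              exact le_trans (min_le_right _ _) (le_trans this (le_max_left _ _))
          · intro i
            exact Ivw.mono_set (hsub i)
      _ ≤ ∑ i : Fin n, ((v (p ((i:ℕ)+1)) - v (p i)) / 2
            + (w (p ((i:ℕ)+1)) - w (p i)) / 2 + η) * δ := by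
          apply Finset.sum_le_sum
          intro i _
          have hci : (∫ x in Set.Ico (p i) (p ((i:ℕ)+1)), |v x - w x|)
              ≤ ∫ _x in Set.Ico (p i) (p ((i:ℕ)+1)),
                ((v (p ((i:ℕ)+1)) - v (p i)) / 2 + (w (p ((i:ℕ)+1)) - w (p i)) / 2 + η) := by
            apply setIntegral_mono_on (Ivw.mono_set (hsub i))
              (integrableOn_const (by rw [Real.volume_Ico]; exact ENNReal.ofReal_ne_top))
              measurableSet_Ico
            intro x hx
            exact hpt i x ⟨hx.1, hx.2.le⟩
          rw [setIntegral_const, measureReal_def, hvol i, smul_eq_mul, mul_comm] at hci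
          exact hci
      _ ≤ 2 * ε := by
          have t1 := tel v
          have t2 := tel w
          have hsum : ∑ i : Fin n, ((v (p ((i:ℕ)+1)) - v (p i)) / 2
                + (w (p ((i:ℕ)+1)) - w (p i)) / 2 + η) * δ
              = (v (p n) - v (p 0)) * (δ/2) + (w (p n) - w (p 0)) * (δ/2) + (n:ℝ) * (η * δ) := by
            have hterm : ∀ i : Fin n, ((v (p ((i:ℕ)+1)) - v (p i)) / 2
                + (w (p ((i:ℕ)+1)) - w (p i)) / 2 + η) * δ
                = (v (p ((i:ℕ)+1)) - v (p i)) * (δ/2)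
                  + (w (p ((i:ℕ)+1)) - w (p i)) * (δ/2) + η * δ := fun i => by ring
            rw [Finset.sum_congr rfl fun i _ => hterm i, Finset.sum_add_distrib,
              Finset.sum_add_distrib, ← Finset.sum_mul, ← Finset.sum_mul, t1, t2,
              Finset.sum_const, Finset.card_univ, Fintype.card_fin, nsmul_eq_mul]
          rw [hsum, hpn, hp0]
          have hv0 : 0 ≤ v 0 := by
            have := (hv.2 0 (by constructor <;> simp [hL.le])).1; exact this
          have hvL : v L ≤ M := (hv.2 L (by constructor <;> simp [hL.le])).2
          have hw0 : 0 ≤ w 0 := (hw.2 0 (by constructor <;> simp [hL.le])).1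
          have hwL : w L ≤ M := (hw.2 L (by constructor <;> simp [hL.le])).2
          have b1 : (v L - v 0) * (δ/2) ≤ M * (δ/2) :=
            mul_le_mul_of_nonneg_right (by linarith) (by positivity)
          have b2 : (w L - w 0) * (δ/2) ≤ M * (δ/2) :=
            mul_le_mul_of_nonneg_right (by linarith) (by positivity)
          have hMδ : M * δ = M * L / n := by rw [hδdef]; ring
          have heq : M * (δ/2) + M * (δ/2) = M * δ := by ring
          have h2 : (n:ℝ) * (η * δ) = M * L / n := by
            rw [hηdef, hδdef]
            field_simp
          linarith
  -- conclude
  have hcN : coverNum (fun f g => ∫ x in Set.Icc (0:ℝ) L, |f x - g x|) K ε ≤ 2 ^ (2 * n) := by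
    refine le_trans (coverNum_le_card _ _ _ S hcov ?_) (card_mono_le n)
    intro k x hx y hy
    exact hdiam k x hx y hy
  rcases Nat.eq_zero_or_pos (coverNum (fun f g => ∫ x in Set.Icc (0:ℝ) L, |f x - g x|) K ε)
    with h0 | hposc
  · rw [h0]
    simp only [Nat.cast_zero, Real.logb_zero]
    positivity
  · have h1 : (1:ℝ) ≤ (coverNum (fun f g => ∫ x in Set.Icc (0:ℝ) L, |f x - g x|) K ε : ℝ) := by
      exact_mod_cast hposc
    have hle : Real.logb 2 (coverNum (fun f g => ∫ x in Set.Icc (0:ℝ) L, |f x - g x|) K ε)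
        ≤ Real.logb 2 ((2:ℝ) ^ (2*n)) := by
      apply Real.logb_le_logb_of_le (by norm_num) (by linarith)
      exact_mod_cast hcN
    rw [Real.logb_pow, Real.logb_self_eq_one (by norm_num)] at hle
    have hfin : ((2*n : ℕ):ℝ) * 1 ≤ 4 * L * M / ε := by
      have : 4 * L * M / ε = 4 * T := by rw [hT]; ring
      rw [this]
      push_cast
      linarith
    linarith
end

section
/- Let $\lambda : \mathbb{R} \to \mathbb{R}$ be $C^1$ with $|\lambda'| \leq \alpha$ on $\mathbb{R}$, let $\phi : \mathbb{R} \to \mathbb{R}$ be piecewise $C^1$ with $|\phi'(y)| \leq b$ at every point of differentiability, and define $x(t,y) = y + \lambda(\phi(y)) \cdot t$. Then for every $t \in [0, 1/(2\alpha b)]$, the map $y \mapsto x(t,y)$ is a strictly increasing bijection of $\mathbb{R}$ onto $\mathbb{R}$, and at every point $y$ of differentiability of $\phi$ one has $\frac{\partial}{\partial y} x(t,y) \geq 1/2$. -/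
lemma mono_aux (g : ℝ → ℝ) (hc : Continuous g) (S : Finset ℝ)
    (hd : ∀ y ∉ (S : Set ℝ), ∃ d, HasDerivAt g d y ∧ 0 ≤ d) :
    Monotone g := by
  have key : ∀ n : ℕ, ∀ a c : ℝ, a ≤ c →
      (S.filter (fun s => s ∈ Set.Ioo a c)).card ≤ n → g a ≤ g c := by
    intro n
    induction n with
    | zero =>
      intro a c hac hcard
      have hemp : ∀ x ∈ Set.Ioo a c, x ∉ (S : Set ℝ) := by
        intro x hx hxS
        have : x ∈ S.filter (fun s => s ∈ Set.Ioo a c) := by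
          exact Finset.mem_filter.mpr ⟨hxS, hx.1, hx.2⟩
        have := Finset.card_pos.mpr ⟨x, this⟩
        omega
      have hmono : MonotoneOn g (Set.Icc a c) := by
        apply monotoneOn_of_deriv_nonneg (convex_Icc a c) hc.continuousOn
        · intro x hx
          rw [interior_Icc] at hx
          obtain ⟨d, hdd, _⟩ := hd x (hemp x hx)
          exact hdd.differentiableAt.differentiableWithinAt
        · intro x hx
          rw [interior_Icc] at hx
          obtain ⟨d, hdd, hdnn⟩ := hd x (hemp x hx)
          rw [hdd.deriv]; exact hdnn
      exact hmono ⟨le_refl a, hac⟩ ⟨hac, le_refl c⟩ hac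
    | succ n ih =>
      intro a c hac hcard
      rcases (S.filter (fun s => s ∈ Set.Ioo a c)).eq_empty_or_nonempty with he | ⟨s, hs⟩
      · exact ih a c hac (by rw [he]; simp)
      · rw [Finset.mem_filter] at hs
        obtain ⟨hsS, hs1, hs2⟩ := hs
        have h1 : g a ≤ g s := by
          apply ih a s hs1.le
          have hsub : S.filter (fun x => x ∈ Set.Ioo a s) ⊆
              (S.filter (fun x => x ∈ Set.Ioo a c)).erase s := by
            intro x hx
            rw [Finset.mem_filter] at hx
            rw [Finset.mem_erase, Finset.mem_filter]
            exact ⟨by rintro rfl; exact absurd hx.2.2 (lt_irrefl _),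
              hx.1, hx.2.1, hx.2.2.trans hs2⟩
          calc (S.filter (fun x => x ∈ Set.Ioo a s)).card
              ≤ ((S.filter (fun x => x ∈ Set.Ioo a c)).erase s).card :=
                Finset.card_le_card hsub
            _ ≤ n := by
                rw [Finset.card_erase_of_mem (by simp [Finset.mem_filter, hsS, hs1, hs2])]
                omega
        have h2 : g s ≤ g c := by
          apply ih s c hs2.le
          have hsub : S.filter (fun x => x ∈ Set.Ioo s c) ⊆
              (S.filter (fun x => x ∈ Set.Ioo a c)).erase s := by
            intro x hx
            rw [Finset.mem_filter] at hx
            rw [Finset.mem_erase, Finset.mem_filter]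
            exact ⟨by rintro rfl; exact absurd hx.2.1 (lt_irrefl _),
              hx.1, hs1.trans hx.2.1, hx.2.2⟩
          calc (S.filter (fun x => x ∈ Set.Ioo s c)).card
              ≤ ((S.filter (fun x => x ∈ Set.Ioo a c)).erase s).card :=
                Finset.card_le_card hsub
            _ ≤ n := by
                rw [Finset.card_erase_of_mem (by simp [Finset.mem_filter, hsS, hs1, hs2])]
                omega
        exact h1.trans h2
  intro a c hac
  exact key S.card a c hac (Finset.card_filter_le _ _)

/-- Characteristics of a simple wave do not cross for small times: if
`|λ'| ≤ α`, `φ` is piecewise `C¹` with `|φ'| ≤ b`, and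
`x(t,y) = y + λ(φ(y)) t`, then for `t ∈ [0, 1/(2αb)]` the map `y ↦ x(t,y)` is
a strictly increasing bijection of `ℝ`, and `∂x/∂y ≥ 1/2` at every point of
differentiability of `φ`. -/
theorem stmt9 (lam φ : ℝ → ℝ) (α b : ℝ) (hα : 0 < α) (hb : 0 < b)
    (hlam : ContDiff ℝ 1 lam) (hlam' : ∀ u, |deriv lam u| ≤ α)
    (S : Finset ℝ) (hφc : Continuous φ)
    (hφd : ∀ y ∉ (S : Set ℝ), ContDiffAt ℝ 1 φ y)
    (hφ' : ∀ y, DifferentiableAt ℝ φ y → |deriv φ y| ≤ b) :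
    ∀ t ∈ Set.Icc (0:ℝ) (1 / (2 * α * b)),
      StrictMono (fun y => y + lam (φ y) * t) ∧
      Function.Bijective (fun y => y + lam (φ y) * t) ∧
      ∀ y, DifferentiableAt ℝ φ y →
        1 / 2 ≤ deriv (fun z => z + lam (φ z) * t) y := by
  rintro t ⟨ht0, ht1⟩
  have h2ab : (0:ℝ) < 2 * α * b := by positivity
  have habt : α * b * t ≤ 1 / 2 := by
    rw [le_div_iff₀ h2ab] at ht1; nlinarith
  -- bound on the derivative of the composite term
  have hbound : ∀ y, DifferentiableAt ℝ φ y →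
      |deriv lam (φ y) * deriv φ y * t| ≤ 1 / 2 := by
    intro y hy
    rw [abs_mul, abs_mul, abs_of_nonneg ht0]
    calc |deriv lam (φ y)| * |deriv φ y| * t ≤ α * b * t := by
          exact mul_le_mul (mul_le_mul (hlam' (φ y)) (hφ' y hy) (abs_nonneg _) hα.le)
            le_rfl ht0 (by positivity)
      _ ≤ 1 / 2 := habt
  -- derivative of lam ∘ φ at points of differentiability
  have hcomp : ∀ y, DifferentiableAt ℝ φ y →
      HasDerivAt (fun z => lam (φ z)) (deriv lam (φ y) * deriv φ y) y := by
    intro y hy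
    exact ((hlam.differentiable one_ne_zero (φ y)).hasDerivAt).comp y hy.hasDerivAt
  -- the auxiliary monotone function
  set g : ℝ → ℝ := fun z => z / 2 + lam (φ z) * t with hg_def
  have hgc : Continuous g := by
    apply Continuous.add (by fun_prop)
    exact (hlam.continuous.comp hφc).mul continuous_const
  have hgmono : Monotone g := by
    apply mono_aux g hgc S
    intro y hy
    have hdy : DifferentiableAt ℝ φ y := (hφd y hy).differentiableAt one_ne_zero
    refine ⟨1 / 2 + deriv lam (φ y) * deriv φ y * t, ?_, ?_⟩
    · have := ((hasDerivAt_id y).div_const 2).add ((hcomp y hdy).mul_const t)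
      simpa [Pi.add_def, hg_def] using this
    · have := abs_le.mp (hbound y hdy)
      linarith [this.1]
  -- key growth estimate
  have hkey : ∀ y z : ℝ, y ≤ z →
      y + lam (φ y) * t + (z - y) / 2 ≤ z + lam (φ z) * t := by
    intro y z hyz
    have := hgmono hyz
    simp only [hg_def] at this
    linarith
  have hsm : StrictMono (fun y => y + lam (φ y) * t) := by
    intro y z hyz
    have := hkey y z hyz.le
    simp only
    linarith
  refine ⟨hsm, ⟨hsm.injective, ?_⟩, ?_⟩
  · -- surjective
    have hfc : Continuous (fun y => y + lam (φ y) * t) := by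
      exact continuous_id.add ((hlam.continuous.comp hφc).mul continuous_const)
    apply Continuous.surjective hfc
    · have hlow : Filter.Tendsto (fun y : ℝ => 0 + lam (φ 0) * t + (y - 0) / 2)
          Filter.atTop Filter.atTop := by
        apply Filter.tendsto_atTop_add_const_left
        exact Filter.Tendsto.atTop_div_const (by norm_num)
          (Filter.tendsto_atTop_add_const_right _ _ Filter.tendsto_id)
      refine Filter.tendsto_atTop_mono' Filter.atTop ?_ hlow
      filter_upwards [Filter.eventually_ge_atTop (0:ℝ)] with y hy
      exact hkey 0 y hy
    · have hup : Filter.Tendsto (fun y : ℝ => 0 + lam (φ 0) * t - (0 - y) / 2)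
          Filter.atBot Filter.atBot := by
        have heq : (fun y : ℝ => 0 + lam (φ 0) * t - (0 - y) / 2)
            = fun y : ℝ => y / 2 + (0 + lam (φ 0) * t) := by funext y; ring
        rw [heq]
        exact Filter.tendsto_atBot_add_const_right _ _
          (Filter.Tendsto.atBot_div_const (by norm_num) Filter.tendsto_id)
      refine Filter.tendsto_atBot_mono' Filter.atBot ?_ hup
      filter_upwards [Filter.eventually_le_atBot (0:ℝ)] with y hy
      have := hkey y 0 hy
      linarith
  · -- derivative bound
    intro y hy
    have hdf : HasDerivAt (fun z => z + lam (φ z) * t)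
        (1 + deriv lam (φ y) * deriv φ y * t) y := by
      simpa [Pi.add_def] using (hasDerivAt_id' y).add ((hcomp y hy).mul_const t)
    rw [hdf.deriv]
    have := abs_le.mp (hbound y hy)
    linarith [this.1]
end

section
/- Let $n \geq 2$, $N \geq 1$, $L, h, \varepsilon > 0$ with $\varepsilon \leq NLh/4$. Consider the family $\mathcal{B}_{n,h}$ of $2^{nN}$ functions indexed by $(\{0,1\}^n)^N$, with pairwise $L^1$-distances equal to $\frac{Lh}{n}$ times the Hamming distance of the indices. Then $N_\varepsilon(\mathcal{B}_{n,h} \mid L^1) \geq \exp\left(\frac{nN}{2}\left(1 - \frac{4\varepsilon}{LhN}\right)^2\right)$. -/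
open Finset in
lemma sum_exp_hamming {ι : Type*} [Fintype ι] [DecidableEq ι] (c : ι → Bool) (t : ℝ) :
    ∑ x : ι → Bool, Real.exp (-t * (hammingDist x c : ℝ)) =
      (1 + Real.exp (-t)) ^ (Fintype.card ι) := by
  have hham : ∀ x : ι → Bool, (hammingDist x c : ℝ) =
      ∑ i, (if x i ≠ c i then (1:ℝ) else 0) := by
    intro x
    simp [hammingDist, Finset.card_filter]
  calc ∑ x : ι → Bool, Real.exp (-t * (hammingDist x c : ℝ))
      = ∑ x : ι → Bool, ∏ i, Real.exp (-t * (if x i ≠ c i then (1:ℝ) else 0)) := by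
        refine Finset.sum_congr rfl fun x _ => ?_
        rw [hham, Finset.mul_sum, Real.exp_sum]
    _ = ∏ i : ι, ∑ b : Bool, Real.exp (-t * (if b ≠ c i then (1:ℝ) else 0)) := by
        rw [← Fintype.piFinset_univ]
        exact Finset.sum_prod_piFinset Finset.univ
          (fun i b => Real.exp (-t * if b ≠ c i then (1:ℝ) else 0))
    _ = ∏ i : ι, (1 + Real.exp (-t)) := by
        refine Finset.prod_congr rfl fun i _ => ?_
        cases hc : c i <;> simp [Fintype.sum_bool] <;> ring_nf <;> simp [Real.exp_zero] <;> ring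
    _ = (1 + Real.exp (-t)) ^ (Fintype.card ι) := by
        simp [Finset.prod_const, Finset.card_univ]

lemma card_le_ball {ι : Type*} [Fintype ι] [DecidableEq ι] (A : Finset (ι → Bool))
    (c : ι → Bool) (r t : ℝ) (ht : 0 ≤ t)
    (hA : ∀ x ∈ A, (hammingDist x c : ℝ) ≤ r) :
    (A.card : ℝ) ≤ Real.exp (t * r) * (1 + Real.exp (-t)) ^ (Fintype.card ι) := by
  have h1 : (A.card : ℝ) ≤ ∑ x ∈ A, Real.exp (t * r) * Real.exp (-t * (hammingDist x c : ℝ)) := by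
    have hc : (A.card : ℝ) = ∑ _x ∈ A, (1:ℝ) := by simp
    rw [hc]
    refine Finset.sum_le_sum fun x hx => ?_
    rw [← Real.exp_add]
    have : (0:ℝ) ≤ t * r + -t * (hammingDist x c : ℝ) := by
      have := hA x hx
      nlinarith
    simpa using Real.one_le_exp this
  have h2 : ∑ x ∈ A, Real.exp (t * r) * Real.exp (-t * (hammingDist x c : ℝ)) ≤
      ∑ x : ι → Bool, Real.exp (t * r) * Real.exp (-t * (hammingDist x c : ℝ)) := by
    refine Finset.sum_le_sum_of_subset_of_nonneg (Finset.subset_univ A) fun x _ _ => ?_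
    positivity
  calc (A.card : ℝ) ≤ _ := h1
    _ ≤ _ := h2
    _ = Real.exp (t * r) * (1 + Real.exp (-t)) ^ (Fintype.card ι) := by
        rw [← Finset.mul_sum, sum_exp_hamming]

lemma ham_curry {N n : ℕ} (a b : Fin N → Fin n → Bool) :
    hammingDist (fun p : Fin N × Fin n => a p.1 p.2) (fun p => b p.1 p.2) =
      ∑ k, hammingDist (a k) (b k) := by
  simp [hammingDist, Finset.card_filter, Fintype.sum_prod_type]

lemma one_add_exp_le (t : ℝ) : 1 + Real.exp (-t) ≤ 2 * Real.exp (t^2/8 - t/2) := by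
  have e1 : Real.exp (-t/2) * Real.exp (t/2) = 1 := by rw [← Real.exp_add, neg_div, neg_add_cancel, Real.exp_zero]
  have e2 : Real.exp (-t/2) * Real.exp (-(t/2)) = Real.exp (-t) := by rw [← Real.exp_add]; ring_nf
  have h : 1 + Real.exp (-t) = 2 * Real.exp (-t/2) * Real.cosh (t/2) := by
    rw [Real.cosh_eq]
    linear_combination -e1 - e2
  rw [h]
  have hc := Real.cosh_le_exp_half_sq (t/2)
  calc 2 * Real.exp (-t/2) * Real.cosh (t/2)
      ≤ 2 * Real.exp (-t/2) * Real.exp ((t/2)^2/2) := by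
        have : (0:ℝ) < 2 * Real.exp (-t/2) := by positivity
        nlinarith [Real.exp_pos (-t/2)]
    _ = 2 * Real.exp (t^2/8 - t/2) := by
        rw [mul_assoc, ← Real.exp_add]; ring_nf


/-- Lower bound on the covering number of a rescaled Hamming cube: a family of
`2^{nN}` points with pairwise distances `(L h / n)` times the Hamming distance
of the indices has `N_ε ≥ exp((nN/2)(1 - 4ε/(LhN))²)` for `ε ≤ NLh/4`. -/
theorem stmt13 (n N : ℕ) (hn : 2 ≤ n) (hN : 1 ≤ N) (L h ε : ℝ)
    (hL : 0 < L) (hh : 0 < h) (hε : 0 < ε) (hεb : ε ≤ N * L * h / 4)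
    {α : Type*} (d : α → α → ℝ)
    (f : (Fin N → Fin n → Bool) → α)
    (hd : ∀ a b, d (f a) (f b) =
      L * h / n * ∑ k : Fin N, (hammingDist (a k) (b k) : ℝ)) :
    Real.exp (((n : ℝ) * N / 2) * (1 - 4 * ε / (L * h * N)) ^ 2) ≤
      (coverNum d (Set.range f) ε : ℝ) := by
  classical
  have hn0 : 0 < n := lt_of_lt_of_le two_pos hn
  have hnR : (0:ℝ) < n := by exact_mod_cast hn0
  have hNR : (0:ℝ) < N := by exact_mod_cast hN
  have hLh : (0:ℝ) < L * h := mul_pos hL hh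
  set r : ℝ := 2 * ε * n / (L * h) with hrdef
  set t : ℝ := 2 - 8 * ε / (L * h * N) with htdef
  have ht0 : 0 ≤ t := by
    have h8 : 8 * ε / (L * h * N) ≤ 2 := by
      rw [div_le_iff₀ (by positivity)]
      nlinarith
    rw [htdef]; linarith
  set S := {m : ℕ | ∃ F : Fin m → Set α, Set.range f ⊆ (⋃ i, F i) ∧
    ∀ i, ∀ x ∈ F i, ∀ y ∈ F i, d x y ≤ 2 * ε} with hSdef
  have hSne : S.Nonempty := by
    refine ⟨Fintype.card (Fin N → Fin n → Bool),
      fun i => {f ((Fintype.equivFin _).symm i)}, ?_, ?_⟩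
    · rintro x ⟨a, rfl⟩
      exact Set.mem_iUnion.2 ⟨Fintype.equivFin _ a, by simp⟩
    · rintro i x hx y hy
      simp only [Set.mem_singleton_iff] at hx hy
      subst hx; subst hy
      rw [hd]
      simp only [hammingDist_self, Nat.cast_zero, Finset.sum_const, smul_zero, mul_zero]
      linarith
  set m := coverNum d (Set.range f) ε with hmdef
  have hmS : m ∈ S := Nat.sInf_mem hSne
  obtain ⟨F, hcov, hdiam⟩ := hmS
  have hgc : ∀ a : Fin N → Fin n → Bool, ∃ i, f a ∈ F i := by
    intro a
    exact Set.mem_iUnion.1 (hcov ⟨a, rfl⟩)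
  choose g hg using hgc
  set e : (Fin N → Fin n → Bool) → (Fin N × Fin n → Bool) := fun a p => a p.1 p.2 with hedef
  have he : Function.Injective e := by
    intro a b hab
    funext k j
    exact congrFun hab (k, j)
  set B : ℝ := Real.exp (t * r) * (1 + Real.exp (-t)) ^ (N * n) with hBdef
  have key : ∀ i : Fin m,
      (((Finset.univ.filter fun a => g a = i)).card : ℝ) ≤ B := by
    intro i
    rcases (Finset.univ.filter fun a => g a = i).eq_empty_or_nonempty with hem | ⟨c, hc⟩
    · rw [hem]
      simp only [Finset.card_empty, Nat.cast_zero]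
      positivity
    · have hci : g c = i := (Finset.mem_filter.1 hc).2
      have hball : ∀ x ∈ (Finset.univ.filter fun a => g a = i).image e,
          (hammingDist x (e c) : ℝ) ≤ r := by
        rintro x hx
        obtain ⟨a, ha, rfl⟩ := Finset.mem_image.1 hx
        have hai : g a = i := (Finset.mem_filter.1 ha).2
        have hdab : d (f a) (f c) ≤ 2 * ε := by
          have h1 : f a ∈ F i := hai ▸ hg a
          have h2 : f c ∈ F i := hci ▸ hg c
          exact hdiam i _ h1 _ h2
        rw [hd] at hdab
        have hsum : (∑ k : Fin N, (hammingDist (a k) (c k) : ℝ)) ≤ r := by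
          rw [hrdef, le_div_iff₀ hLh]
          calc (∑ k : Fin N, (hammingDist (a k) (c k) : ℝ)) * (L * h)
              = (L * h / n * ∑ k : Fin N, (hammingDist (a k) (c k) : ℝ)) * n := by
                field_simp
            _ ≤ (2 * ε) * n := by
                apply mul_le_mul_of_nonneg_right hdab (le_of_lt hnR)
            _ = 2 * ε * n := by ring
        have hcur : (hammingDist (e a) (e c) : ℝ) =
            ∑ k : Fin N, (hammingDist (a k) (c k) : ℝ) := by
          rw [hedef]
          rw [show (hammingDist (fun p : Fin N × Fin n => a p.1 p.2)
            (fun p : Fin N × Fin n => c p.1 p.2)) = ∑ k, hammingDist (a k) (c k)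
            from ham_curry a c]
          push_cast
          rfl
        rw [hcur]
        exact hsum
      have := card_le_ball ((Finset.univ.filter fun a => g a = i).image e) (e c) r t ht0 hball
      rw [Finset.card_image_of_injective _ he] at this
      rw [Fintype.card_prod, Fintype.card_fin, Fintype.card_fin] at this
      exact this
  have hcount : ((2:ℝ)) ^ (n * N) ≤ (m : ℝ) * B := by
    have hcard : Fintype.card (Fin N → Fin n → Bool) = 2 ^ (n * N) := by
      simp [Fintype.card_fun]
      rw [pow_mul]
    have hfib : Fintype.card (Fin N → Fin n → Bool) =
        ∑ i : Fin m, ((Finset.univ.filter fun a => g a = i)).card := by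
      rw [← Finset.card_univ]
      exact Finset.card_eq_sum_card_fiberwise fun x _ => Finset.mem_univ (g x)
    have : ((2:ℝ)) ^ (n * N) = ∑ i : Fin m,
        (((Finset.univ.filter fun a => g a = i)).card : ℝ) := by
      rw [← Nat.cast_sum, ← hfib, hcard]
      push_cast
      ring
    rw [this]
    calc ∑ i : Fin m, (((Finset.univ.filter fun a => g a = i)).card : ℝ)
        ≤ ∑ _i : Fin m, B := Finset.sum_le_sum fun i _ => key i
      _ = (m : ℝ) * B := by simp [Finset.sum_const, nsmul_eq_mul]
  have hB0 : 0 < B := by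
    rw [hBdef]
    positivity
  have hupper : Real.exp (((n : ℝ) * N / 2) * (1 - 4 * ε / (L * h * N)) ^ 2) * B ≤
      ((2:ℝ)) ^ (n * N) := by
    have hpow : (1 + Real.exp (-t)) ^ (N * n) ≤
        (2 * Real.exp (t ^ 2 / 8 - t / 2)) ^ (N * n) := by
      apply pow_le_pow_left₀ (by positivity) (one_add_exp_le t)
    have hexpand : (2 * Real.exp (t ^ 2 / 8 - t / 2)) ^ (N * n) =
        ((2:ℝ)) ^ (N * n) * Real.exp ((N * n : ℕ) * (t ^ 2 / 8 - t / 2)) := by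
      rw [mul_pow, ← Real.exp_nat_mul]
    have hBle : B ≤ ((2:ℝ)) ^ (N * n) *
        Real.exp (t * r + (N * n : ℕ) * (t ^ 2 / 8 - t / 2)) := by
      rw [hBdef, Real.exp_add]
      calc Real.exp (t * r) * (1 + Real.exp (-t)) ^ (N * n)
          ≤ Real.exp (t * r) * ((2:ℝ) ^ (N * n) *
            Real.exp ((N * n : ℕ) * (t ^ 2 / 8 - t / 2))) := by
            rw [← hexpand]
            exact mul_le_mul_of_nonneg_left hpow (le_of_lt (Real.exp_pos _))
        _ = (2:ℝ) ^ (N * n) * (Real.exp (t * r) *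
            Real.exp ((N * n : ℕ) * (t ^ 2 / 8 - t / 2))) := by ring
    have hzero : ((n : ℝ) * N / 2) * (1 - 4 * ε / (L * h * N)) ^ 2 +
        (t * r + (N * n : ℕ) * (t ^ 2 / 8 - t / 2)) = 0 := by
      rw [htdef, hrdef]
      push_cast
      field_simp
      ring
    calc Real.exp (((n : ℝ) * N / 2) * (1 - 4 * ε / (L * h * N)) ^ 2) * B
        ≤ Real.exp (((n : ℝ) * N / 2) * (1 - 4 * ε / (L * h * N)) ^ 2) *
          ((2:ℝ) ^ (N * n) * Real.exp (t * r + (N * n : ℕ) * (t ^ 2 / 8 - t / 2))) :=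
          mul_le_mul_of_nonneg_left hBle (le_of_lt (Real.exp_pos _))
      _ = (2:ℝ) ^ (N * n) * Real.exp (((n : ℝ) * N / 2) * (1 - 4 * ε / (L * h * N)) ^ 2 +
          (t * r + (N * n : ℕ) * (t ^ 2 / 8 - t / 2))) := by
          rw [Real.exp_add, mul_left_comm, ← Real.exp_add, ← Real.exp_add]
      _ = (2:ℝ) ^ (N * n) := by rw [hzero, Real.exp_zero, mul_one]
      _ = (2:ℝ) ^ (n * N) := by rw [Nat.mul_comm]
  have hfinal : Real.exp (((n : ℝ) * N / 2) * (1 - 4 * ε / (L * h * N)) ^ 2) * B ≤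
      (m : ℝ) * B := le_trans hupper hcount
  exact le_of_mul_le_mul_right hfinal hB0
end

section
/- Let $c, T, L_T > 0$ and let $K$ be a set of functions $\psi : \mathbb{R} \to \mathbb{R}$ such that every $\psi \in K$ is supported in a common interval $[a, a + 2L_T]$, satisfies $\|\psi\|_{L^\infty} \leq \frac{L_T}{cT}$, and satisfies the one-sided Lipschitz condition $\frac{\psi(y) - \psi(x)}{y - x} \leq \frac{1}{cT}$ for all $x < y$. Then for $\varepsilon > 0$ sufficiently small, $N_\varepsilon(K \mid L^1(\mathbb{R})) \leq 2^{\frac{32 L_T^2}{cT} \cdot \frac{1}{\varepsilon}}$. -/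
open MeasureTheory

lemma count_mono_maps (N : ℕ) :
    ((Finset.univ.filter
      (fun v : Fin N → Fin (N+1) => ∀ i j : Fin N, i ≤ j → v i ≤ v j)).card : ℕ)
      ≤ 2 ^ (2 * N) := by
  classical
  have h := Finset.card_le_card_of_injOn
      (f := fun v : Fin N → Fin (N+1) =>
        Finset.image (fun i : Fin N => (i : ℕ) + (v i : ℕ)) Finset.univ)
      (s := Finset.univ.filter
        (fun v : Fin N → Fin (N+1) => ∀ i j : Fin N, i ≤ j → v i ≤ v j))
      (t := (Finset.range (2*N)).powerset) ?_ ?_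
  · calc _ ≤ ((Finset.range (2*N)).powerset).card := h
      _ = 2 ^ (2*N) := by simp
  · intro v _
    rw [Finset.mem_coe, Finset.mem_powerset]
    intro j hj
    simp only [Finset.mem_image, Finset.mem_univ, true_and] at hj
    obtain ⟨i, rfl⟩ := hj
    rw [Finset.mem_range, two_mul]
    exact Nat.add_lt_add_of_lt_of_le i.isLt (Nat.lt_succ_iff.mp (v i).isLt)
  · intro v hv w hw hvw
    simp only [Finset.mem_coe, Finset.mem_filter, Finset.mem_univ, true_and] at hv hw
    have hsv : StrictMono (fun i : Fin N => (i : ℕ) + (v i : ℕ)) := by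
      intro i j hij
      exact Nat.add_lt_add_of_lt_of_le hij (by exact_mod_cast hv i j hij.le)
    have hsw : StrictMono (fun i : Fin N => (i : ℕ) + (w i : ℕ)) := by
      intro i j hij
      exact Nat.add_lt_add_of_lt_of_le hij (by exact_mod_cast hw i j hij.le)
    set s : Finset ℕ := Finset.image (fun i : Fin N => (i : ℕ) + (v i : ℕ)) Finset.univ with hs
    have hcard : s.card = N := by
      rw [hs, Finset.card_image_of_injective _ hsv.injective, Finset.card_univ,
        Fintype.card_fin]
    have h1 := Finset.orderEmbOfFin_unique hcard
      (f := fun i : Fin N => (i : ℕ) + (v i : ℕ))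
      (fun i => Finset.mem_image_of_mem _ (Finset.mem_univ i)) hsv
    have h2 := Finset.orderEmbOfFin_unique hcard
      (f := fun i : Fin N => (i : ℕ) + (w i : ℕ))
      (fun i => by
        rw [hs]
        have hvw' : Finset.image (fun i : Fin N => (i:ℕ) + (v i : ℕ)) Finset.univ
            = Finset.image (fun i : Fin N => (i:ℕ) + (w i : ℕ)) Finset.univ := hvw
        rw [hvw']
        exact Finset.mem_image_of_mem _ (Finset.mem_univ i)) hsw
    funext i
    have := congrFun (h1.trans h2.symm) i
    exact Fin.ext (Nat.add_left_cancel this)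

lemma l1_close (a ℓ M : ℝ) (hℓ : 0 < ℓ) (_hM : 0 < M) (N : ℕ) (hN : 0 < N)
    (u u' g g' : ℝ → ℝ)
    (hgu : ∀ x, u x - u' x = g' x - g x)
    (hg : Monotone g) (hg' : Monotone g')
    (hint : Integrable (fun x => |u x - u' x|))
    (hsupp : ∀ x ∉ Set.Icc a (a + ℓ), u x = 0)
    (hsupp' : ∀ x ∉ Set.Icc a (a + ℓ), u' x = 0)
    (hgb : ∀ x ∈ Set.Icc a (a + ℓ), g x ∈ Set.Icc 0 M)
    (hg'b : ∀ x ∈ Set.Icc a (a + ℓ), g' x ∈ Set.Icc 0 M)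
    (hcode : ∀ i : ℕ, i < N → |g (a + i * (ℓ / N)) - g' (a + i * (ℓ / N))| ≤ M / N) :
    (∫ t, |u t - u' t|) ≤ 3 * (ℓ * M) / N := by
  have hNr : (0:ℝ) < N := by exact_mod_cast hN
  set x : ℕ → ℝ := fun i => a + i * (ℓ / N) with hxdef
  have hx0 : x 0 = a := by simp [hxdef]
  have hxN : x N = a + ℓ := by
    simp only [hxdef]
    field_simp
  have hgap : ∀ k : ℕ, x (k+1) - x k = ℓ / N := by
    intro k
    simp only [hxdef, Nat.cast_succ]
    ring
  have hxmono : Monotone x := by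
    intro i j hij
    simp only [hxdef]
    have : (i:ℝ) ≤ j := by exact_mod_cast hij
    nlinarith [div_pos hℓ hNr]
  have hxmem : ∀ k : ℕ, k ≤ N → x k ∈ Set.Icc a (a + ℓ) := by
    intro k hk
    constructor
    · rw [← hx0]; exact hxmono (Nat.zero_le k)
    · rw [← hxN]; exact hxmono hk
  set h : ℝ → ℝ := fun t => |u t - u' t| with hhdef
  have hhg : ∀ t, h t = |g' t - g t| := by intro t; rw [hhdef]; simp only; rw [hgu]
  -- reduce to interval
  have e1 : (∫ t, h t) = ∫ t in (x 0)..(x N), h t := by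
    rw [intervalIntegral.integral_of_le (by rw [hx0, hxN]; linarith),
      ← integral_Icc_eq_integral_Ioc, ← integral_indicator measurableSet_Icc]
    congr 1
    funext t
    rw [hx0, hxN]
    by_cases ht : t ∈ Set.Icc a (a + ℓ)
    · rw [Set.indicator_of_mem ht]
    · rw [Set.indicator_of_notMem ht, hhdef]
      simp only
      rw [hsupp t ht, hsupp' t ht, sub_zero, abs_zero]
  have hii : ∀ b c : ℝ, IntervalIntegrable h volume b c := fun b c =>
    hint.intervalIntegrable
  have e2 := intervalIntegral.sum_integral_adjacent_intervals (μ := volume) (f := h)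
    (a := x) (n := N) (fun k _ => hii _ _)
  -- per-interval bound
  have hbk : ∀ k, k < N → (∫ t in (x k)..(x (k+1)), h t) ≤
      (ℓ / N) * ((g (x (k+1)) - g (x k)) + (g' (x (k+1)) - g' (x k)) + M / N) := by
    intro k hk
    have hle : x k ≤ x (k+1) := hxmono (Nat.le_succ k)
    set C : ℝ := (g (x (k+1)) - g (x k)) + (g' (x (k+1)) - g' (x k)) + M / N with hC
    have hpt : ∀ t ∈ Set.Icc (x k) (x (k+1)), h t ≤ C := by
      intro t ht
      rw [hhg]
      have h1 : g (x k) ≤ g t := hg ht.1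
      have h2 : g t ≤ g (x (k+1)) := hg ht.2
      have h3 : g' (x k) ≤ g' t := hg' ht.1
      have h4 : g' t ≤ g' (x (k+1)) := hg' ht.2
      have h5 := abs_le.mp (show |g (x k) - g' (x k)| ≤ M / N from hcode k hk)
      rw [abs_le, hC]
      exact ⟨by linarith [h5.1, h5.2], by linarith [h5.1, h5.2]⟩
    calc (∫ t in (x k)..(x (k+1)), h t) ≤ ∫ _ in (x k)..(x (k+1)), C :=
          intervalIntegral.integral_mono_on hle (hii _ _) intervalIntegrable_const hpt
      _ = (ℓ / N) * C := by
          rw [intervalIntegral.integral_const, smul_eq_mul, hgap]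
  -- sum up
  have e3 : (∫ t in (x 0)..(x N), h t) ≤ 3 * (ℓ * M) / N := by
    rw [← e2]
    calc (∑ k ∈ Finset.range N, ∫ t in (x k)..(x (k+1)), h t)
        ≤ ∑ k ∈ Finset.range N, (ℓ / N) *
            ((g (x (k+1)) - g (x k)) + (g' (x (k+1)) - g' (x k)) + M / N) :=
          Finset.sum_le_sum (fun k hk => hbk k (Finset.mem_range.mp hk))
      _ = (ℓ / N) * ((g (x N) - g (x 0)) + (g' (x N) - g' (x 0)) + N * (M / N)) := by
          rw [← Finset.mul_sum]
          congr 1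
          rw [Finset.sum_add_distrib, Finset.sum_add_distrib,
            Finset.sum_range_sub (fun k => g (x k)), Finset.sum_range_sub (fun k => g' (x k)),
            Finset.sum_const, Finset.card_range, nsmul_eq_mul]
      _ ≤ (ℓ / N) * (M + M + M) := by
          have hb1 := hgb (x N) (hxmem N le_rfl)
          have hb2 := hgb (x 0) (hxmem 0 (Nat.zero_le N))
          have hb3 := hg'b (x N) (hxmem N le_rfl)
          have hb4 := hg'b (x 0) (hxmem 0 (Nat.zero_le N))
          have hNM : (N:ℝ) * (M / N) = M := by field_simp
          have hpos : (0:ℝ) < ℓ / N := div_pos hℓ hNr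
          rw [hNM]
          apply mul_le_mul_of_nonneg_left _ hpos.le
          simp only [Set.mem_Icc] at hb1 hb2 hb3 hb4
          linarith [hb1.2, hb2.1, hb3.2, hb4.1]
      _ = 3 * (ℓ * M) / N := by ring
  have efin : (∫ t, |u t - u' t|) = ∫ t, h t := rfl
  rw [efin, e1]
  exact e3


/-- Upper covering estimate for a class of functions supported in a common
interval of length `2 L_T`, bounded by `L_T/(cT)`, and satisfying the
one-sided Lipschitz condition with constant `1/(cT)`: for `ε` sufficiently
small, `N_ε(K | L¹(ℝ)) ≤ 2^{(32 L_T²/(cT)) / ε}`. -/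
theorem stmt18 (c T LT : ℝ) (hc : 0 < c) (hT : 0 < T) (hLT : 0 < LT)
    (a : ℝ) (K : Set (ℝ → ℝ))
    (hK : ∀ ψ ∈ K,
      (∀ x ∉ Set.Icc a (a + 2 * LT), ψ x = 0) ∧
      (∀ x, |ψ x| ≤ LT / (c * T)) ∧
      (∀ x y : ℝ, x < y → (ψ y - ψ x) / (y - x) ≤ 1 / (c * T))) :
    ∃ ε₀ > (0:ℝ), ∀ ε : ℝ, 0 < ε → ε < ε₀ →
      ((coverNum (fun f g : ℝ → ℝ => ∫ x, |f x - g x|) K ε : ℝ)) ≤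
        (2 : ℝ) ^ (32 * LT ^ 2 / (c * T) * (1 / ε)) := by
  classical
  set B := c * T with hBdef
  have hB0 : 0 < B := mul_pos hc hT
  refine ⟨4 * LT ^ 2 / B, by positivity, ?_⟩
  intro ε hε hεlt
  set M : ℝ := 4 * LT / B with hMdef
  have hM0 : 0 < M := by positivity
  set L : ℝ := 2 * LT with hLdef
  have hL0 : 0 < L := by positivity
  set N : ℕ := ⌈12 * LT ^ 2 / (B * ε)⌉₊ with hNdef
  have hr0 : (0:ℝ) < 12 * LT ^ 2 / (B * ε) := by positivity
  have hN0 : 0 < N := Nat.ceil_pos.mpr hr0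
  have hNr : (0:ℝ) < N := by exact_mod_cast hN0
  -- the monotone companion
  set φ : (ℝ → ℝ) → ℝ → ℝ := fun ψ x => (x - a) / B + LT / B - ψ x with hφdef
  have hφmono : ∀ ψ ∈ K, Monotone (φ ψ) := by
    intro ψ hψ s t hst
    rcases eq_or_lt_of_le hst with rfl | hlt
    · exact le_refl _
    · have h1 := (hK ψ hψ).2.2 s t hlt
      have hts : 0 < t - s := by linarith
      rw [div_le_div_iff₀ hts hB0, one_mul] at h1
      have h2 : ψ t - ψ s ≤ (t - s) / B := by
        rw [le_div_iff₀ hB0]; linarith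
      simp only [hφdef]
      have h3 : (t - a) / B - (s - a) / B = (t - s) / B := by ring
      linarith
  have hφbd : ∀ ψ ∈ K, ∀ x ∈ Set.Icc a (a + L), φ ψ x ∈ Set.Icc 0 M := by
    intro ψ hψ x hx
    obtain ⟨hx1, hx2⟩ := hx
    have hb := abs_le.mp ((hK ψ hψ).2.1 x)
    have e0 : (0:ℝ) ≤ (x - a) / B := div_nonneg (by linarith) hB0.le
    have e1 : (x - a) / B ≤ L / B :=
      (div_le_div_iff_of_pos_right hB0).mpr (by linarith)
    have e2 : L / B + LT / B + LT / B = M := by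
      rw [hLdef, hMdef]; ring
    constructor
    · simp only [hφdef]; linarith [hb.2]
    · simp only [hφdef]; linarith [hb.1]
  -- integrability
  have hmeas : ∀ ψ ∈ K, Integrable ψ := by
    intro ψ hψ
    have hψe : ψ = fun x => (x - a) / B + LT / B - φ ψ x := by
      funext x; simp only [hφdef]; ring
    have hψm : Measurable ψ := by
      rw [hψe]
      exact (((measurable_id.sub_const a).div_const B).add_const (LT / B)).sub
        (hφmono ψ hψ).measurable
    refine Integrable.mono' (g := Set.indicator (Set.Icc a (a + L)) (fun _ => LT / B))
      ?_ hψm.aestronglyMeasurable (Filter.Eventually.of_forall ?_)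
    · exact (integrable_indicator_iff measurableSet_Icc).mpr
        ((integrableOn_const_iff (C := LT / B)).mpr (Or.inr measure_Icc_lt_top))
    · intro t
      by_cases ht : t ∈ Set.Icc a (a + L)
      · rw [Set.indicator_of_mem ht]
        exact (hK ψ hψ).2.1 t
      · rw [Set.indicator_of_notMem ht, (hK ψ hψ).1 t ht]
        simp
  -- the code
  set codeN : (ℝ → ℝ) → ℕ → ℕ := fun ψ i => ⌊φ ψ (a + i * (L / N)) * N / M⌋₊ with hcodeNdef
  set code : (ℝ → ℝ) → Fin N → Fin (N + 1) :=
    fun ψ i => ⟨min (codeN ψ i) N, Nat.lt_succ_of_le (min_le_right _ _)⟩ with hcodedef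
  have hgrid : ∀ i : ℕ, i ≤ N → a + i * (L / N) ∈ Set.Icc a (a + L) := by
    intro i hi
    have hi' : (i:ℝ) ≤ N := by exact_mod_cast hi
    have h1 : (0:ℝ) ≤ (i:ℝ) * (L / N) := by positivity
    have h2 : (i:ℝ) * (L / N) ≤ L := by
      calc (i:ℝ) * (L / N) ≤ (N:ℝ) * (L / N) :=
            mul_le_mul_of_nonneg_right hi' (by positivity)
        _ = L := by field_simp
    exact ⟨by linarith, by linarith⟩
  have hcodeNle : ∀ ψ ∈ K, ∀ i : ℕ, i ≤ N → codeN ψ i ≤ N := by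
    intro ψ hψ i hi
    have hb := hφbd ψ hψ _ (hgrid i hi)
    have hu : φ ψ (a + i * (L / N)) * N / M ≤ (N:ℝ) := by
      rw [div_le_iff₀ hM0]
      have h2 := hb.2
      nlinarith
    calc codeN ψ i ≤ ⌊(N:ℝ)⌋₊ := Nat.floor_le_floor hu
      _ = N := Nat.floor_natCast N
  -- code equality implies closeness at grid points
  have hgridclose : ∀ ψ ∈ K, ∀ ψ' ∈ K, code ψ = code ψ' → ∀ i : ℕ, i < N →
      |φ ψ (a + i * (L / N)) - φ ψ' (a + i * (L / N))| ≤ M / N := by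
    intro ψ hψ ψ' hψ' hcd i hi
    set xi := a + (i:ℝ) * (L / N) with hxidef
    have hb := hφbd ψ hψ _ (hgrid i hi.le)
    have hb' := hφbd ψ' hψ' _ (hgrid i hi.le)
    set u : ℝ := φ ψ xi * N / M with hudef
    set u' : ℝ := φ ψ' xi * N / M with hu'def
    have hu0 : 0 ≤ u := by
      rw [hudef]
      exact div_nonneg (mul_nonneg hb.1 hNr.le) hM0.le
    have hu'0 : 0 ≤ u' := by
      rw [hu'def]
      exact div_nonneg (mul_nonneg hb'.1 hNr.le) hM0.le
    have hfl : ⌊u⌋₊ = ⌊u'⌋₊ := by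
      have h1 := congrFun hcd ⟨i, hi⟩
      rw [hcodedef] at h1
      simp only [Fin.mk.injEq] at h1
      rw [min_eq_left (hcodeNle ψ hψ i hi.le), min_eq_left (hcodeNle ψ' hψ' i hi.le)] at h1
      exact h1
    have l1 : (⌊u⌋₊:ℝ) ≤ u := Nat.floor_le hu0
    have l2 : u < ⌊u⌋₊ + 1 := Nat.lt_floor_add_one u
    have l3 : (⌊u⌋₊:ℝ) ≤ u' := by rw [hfl]; exact Nat.floor_le hu'0
    have l4 : u' < ⌊u⌋₊ + 1 := by rw [hfl]; exact Nat.lt_floor_add_one u'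
    have habs : |u - u'| < 1 := by
      rw [abs_sub_lt_iff]
      exact ⟨by linarith, by linarith⟩
    have hd : u - u' = (φ ψ xi - φ ψ' xi) * (N / M) := by rw [hudef, hu'def]; ring
    have habs2 : |φ ψ xi - φ ψ' xi| * (N / M) < 1 := by
      rw [← abs_of_pos (div_pos hNr hM0), ← abs_mul, ← hd]; exact habs
    have hq : |φ ψ xi - φ ψ' xi| * N < M := by
      have h3 : |φ ψ xi - φ ψ' xi| * (N / M) * M < 1 * M :=
        mul_lt_mul_of_pos_right habs2 hM0
      have h4 : |φ ψ xi - φ ψ' xi| * (N / M) * M = |φ ψ xi - φ ψ' xi| * N := by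
        field_simp
      linarith
    exact (le_div_iff₀ hNr).mpr hq.le
  -- key closeness statement
  have hclose : ∀ ψ ∈ K, ∀ ψ' ∈ K, code ψ = code ψ' →
      (∫ t, |ψ t - ψ' t|) ≤ 2 * ε := by
    intro ψ hψ ψ' hψ' hcd
    have happ := l1_close a L M hL0 hM0 N hN0 ψ ψ' (φ ψ) (φ ψ')
      (fun x => by simp only [hφdef]; ring)
      (hφmono ψ hψ) (hφmono ψ' hψ')
      (((hmeas ψ hψ).sub (hmeas ψ' hψ')).abs)
      ((hK ψ hψ).1) ((hK ψ' hψ').1)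
      (hφbd ψ hψ) (hφbd ψ' hψ')
      (fun i hi => hgridclose ψ hψ ψ' hψ' hcd i hi)
    refine happ.trans ?_
    -- 3 * (L * M) / N ≤ 2 * ε
    rw [div_le_iff₀ hNr]
    have hceil := Nat.le_ceil (12 * LT ^ 2 / (B * ε))
    rw [← hNdef] at hceil
    have hLM : 3 * (L * M) = (12 * LT ^ 2 / (B * ε)) * (2 * ε) := by
      rw [hLdef, hMdef]; field_simp; ring
    rw [hLM]
    have hmul := mul_le_mul_of_nonneg_right hceil
      (le_of_lt (by positivity : (0:ℝ) < 2 * ε))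
    linarith
  -- the cover
  set S : Finset (Fin N → Fin (N+1)) :=
    Finset.univ.filter (fun v => ∀ i j : Fin N, i ≤ j → v i ≤ v j) with hSdef
  have hcodeS : ∀ ψ ∈ K, code ψ ∈ S := by
    intro ψ hψ
    rw [hSdef, Finset.mem_filter]
    refine ⟨Finset.mem_univ _, fun i j hij => ?_⟩
    rw [hcodedef]
    apply Fin.mk_le_mk.mpr
    apply min_le_min ?_ le_rfl
    apply Nat.floor_le_floor
    have hij' : ((i:ℕ):ℝ) ≤ ((j:ℕ):ℝ) := by exact_mod_cast hij
    have hx : a + (i:ℕ) * (L/N) ≤ a + (j:ℕ) * (L/N) := by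
      nlinarith [div_pos hL0 hNr]
    have hmono := hφmono ψ hψ hx
    have h2 := mul_le_mul_of_nonneg_right hmono hNr.le
    exact (div_le_div_iff_of_pos_right hM0).mpr h2
  have hmem : S.card ∈ {n : ℕ | ∃ F : Fin n → Set (ℝ → ℝ), K ⊆ (⋃ i, F i) ∧
      ∀ i, ∀ x ∈ F i, ∀ y ∈ F i, (∫ t, |x t - y t|) ≤ 2 * ε} := by
    refine ⟨fun i => {ψ | ψ ∈ K ∧
      code ψ = ((S.equivFin.symm i : S) : Fin N → Fin (N+1))}, ?_, ?_⟩
    · intro ψ hψ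
      refine Set.mem_iUnion.mpr ⟨S.equivFin ⟨code ψ, hcodeS ψ hψ⟩, hψ, ?_⟩
      rw [Equiv.symm_apply_apply]
    · rintro i f ⟨hfK, hf⟩ g ⟨hgK, hg⟩
      exact hclose f hfK g hgK (hf.trans hg.symm)
  have hcov : coverNum (fun f g : ℝ → ℝ => ∫ x, |f x - g x|) K ε ≤ S.card :=
    Nat.sInf_le hmem
  have hScard : S.card ≤ 2 ^ (2 * N) := by
    rw [hSdef]; exact count_mono_maps N
  -- exponent comparison
  have hexp : ((2 * N : ℕ) : ℝ) ≤ 32 * LT ^ 2 / B * (1 / ε) := by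
    push_cast
    have h1 : (N:ℝ) < 12 * LT ^ 2 / (B * ε) + 1 := by
      rw [hNdef]
      exact Nat.ceil_lt_add_one hr0.le
    have h2 : B * ε < 4 * LT ^ 2 := by
      have := (lt_div_iff₀ hB0).mp hεlt
      linarith
    have h3 : 32 * LT ^ 2 / B * (1 / ε) = 32 * LT ^ 2 / (B * ε) := by
      field_simp
    rw [h3, le_div_iff₀ (by positivity : (0:ℝ) < B * ε)]
    have h4 : (N:ℝ) * (B * ε) < 12 * LT ^ 2 + B * ε := by
      have h5 := mul_lt_mul_of_pos_right h1 (show (0:ℝ) < B * ε by positivity)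
      have h6 : (12 * LT ^ 2 / (B * ε) + 1) * (B * ε) = 12 * LT ^ 2 + B * ε := by
        field_simp
      linarith
    nlinarith [h4, h2]
  calc ((coverNum (fun f g : ℝ → ℝ => ∫ x, |f x - g x|) K ε : ℕ) : ℝ)
      ≤ (S.card : ℝ) := by exact_mod_cast hcov
    _ ≤ (2:ℝ) ^ (2 * N : ℕ) := by exact_mod_cast hScard
    _ = (2:ℝ) ^ ((2 * N : ℕ) : ℝ) := (Real.rpow_natCast 2 (2 * N)).symm
    _ ≤ (2:ℝ) ^ (32 * LT ^ 2 / B * (1 / ε)) :=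
        Real.rpow_le_rpow_of_exponent_le one_le_two hexp
end
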